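/- arXiv:2501.01191 — 5 statements merged into one kernel-verified Lean document; each statement's English description precedes it below -/
import Mathlib

section
/- Let n, m be positive natural numbers, let U ⊆ (Fin m → ℝ) be a set of control inputs, let f : (Fin n → ℝ) → (Fin m → ℝ) → (Fin n → ℝ) be a dynamics function, and let X ⊆ (Fin n → ℝ) be a target set. Define the backward reachable set Pre(X) = {y : ∃ u ∈ U, f y u ∈ X}. Let R ⊆ (Fin n → ℝ) be convex, let u ∈ U, suppose the map y ↦ f y u is differentiable on ℝⁿ, and let J : Fin n → Fin n → ℝ satisfy, for every z ∈ R and all p, q, |(fderiv ℝ (fun y => f y u) z (Pi.single q 1)) p| ≤ J p q. Let x ∈ R, set x' := f x u, and let r ≥ 0 be such that the closed L∞-ball {z : ∀ q, |z q - x' q| ≤ r} is contained in X. Then the set A := {y ∈ R : ∀ p, ∑_{q} J p q * |x q - y q| ≤ r} satisfies A ⊆ Pre(X). -/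
/-- Theorem 3 of the paper: the set `A` built from one forward simulation sample
`(x, u, x' = f x u)` is a sound underapproximation of the backward reachable set
`Pre(X) = {y | ∃ u ∈ U, f y u ∈ X}` of the target set `X`. -/
theorem underapprox_backward_reachable_set
    (n m : ℕ) (hn : 0 < n) (hm : 0 < m)
    (U : Set (Fin m → ℝ)) (f : (Fin n → ℝ) → (Fin m → ℝ) → (Fin n → ℝ))
    (X : Set (Fin n → ℝ))
    (R : Set (Fin n → ℝ)) (hR : Convex ℝ R)
    (u : Fin m → ℝ) (hu : u ∈ U)
    (hf : Differentiable ℝ (fun y => f y u))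
    (J : Fin n → Fin n → ℝ)
    (hJ : ∀ z ∈ R, ∀ p q : Fin n,
      |fderiv ℝ (fun y => f y u) z (Pi.single q 1) p| ≤ J p q)
    (x : Fin n → ℝ) (hx : x ∈ R)
    (r : ℝ) (hr : 0 ≤ r)
    (hball : {z : Fin n → ℝ | ∀ q : Fin n, |z q - f x u q| ≤ r} ⊆ X) :
    {y ∈ R | ∀ p : Fin n, ∑ q : Fin n, J p q * |x q - y q| ≤ r} ⊆
      {y : Fin n → ℝ | ∃ u' ∈ U, f y u' ∈ X} := by
  rintro y ⟨hyR, hyb⟩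
  refine ⟨u, hu, hball ?_⟩
  intro p
  -- the path from x to y
  set c : ℝ → (Fin n → ℝ) := fun t => x + t • (y - x) with hc
  have hcR : ∀ t ∈ Set.Icc (0:ℝ) 1, c t ∈ R := by
    intro t ht
    have := hR hx hyR (a := 1 - t) (b := t) (by linarith [ht.2]) ht.1 (by ring)
    convert this using 1
    funext q
    simp [hc]
    ring
  -- decomposition of the increment y - x
  have hdecomp : (y - x) = ∑ q : Fin n, (y q - x q) • (Pi.single q 1 : Fin n → ℝ) := by
    funext j
    simp [Pi.single_apply, Finset.sum_ite_eq', mul_comm]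
  -- bound on the directional derivative, componentwise
  have hbound : ∀ z ∈ R,
      |fderiv ℝ (fun y => f y u) z (y - x) p| ≤ r := by
    intro z hz
    rw [hdecomp, map_sum]
    calc |(∑ q : Fin n, (fderiv ℝ (fun y => f y u) z) ((y q - x q) • (Pi.single q 1 : Fin n → ℝ))) p|
        = |∑ q : Fin n, (y q - x q) * (fderiv ℝ (fun y => f y u) z (Pi.single q 1) p)| := by
          simp [Finset.sum_apply, smul_eq_mul]
      _ ≤ ∑ q : Fin n, |(y q - x q) * (fderiv ℝ (fun y => f y u) z (Pi.single q 1) p)| :=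
          Finset.abs_sum_le_sum_abs _ _
      _ ≤ ∑ q : Fin n, J p q * |x q - y q| := by
          refine Finset.sum_le_sum fun q _ => ?_
          rw [abs_mul, abs_sub_comm]
          exact mul_le_mul_of_nonneg_left (hJ z hz p q) (abs_nonneg _) |>.trans
            (le_of_eq (mul_comm _ _))
      _ ≤ r := hyb p
  -- the scalar function along the path
  have hderiv : ∀ t ∈ Set.Icc (0:ℝ) 1,
      HasDerivWithinAt (fun t => f (c t) u p)
        (fderiv ℝ (fun y => f y u) (c t) (y - x) p) (Set.Icc (0:ℝ) 1) t := by
    intro t ht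
    have hct : HasDerivAt c (y - x) t := by
      have h1 : HasDerivAt (fun t : ℝ => t • (y - x)) ((1:ℝ) • (y - x)) t :=
        (hasDerivAt_id t).smul_const (y - x)
      simpa [hc] using h1.const_add x
    have h2 : HasDerivAt (fun t => f (c t) u)
        (fderiv ℝ (fun y => f y u) (c t) (y - x)) t :=
      (hf (c t)).hasFDerivAt.comp_hasDerivAt t hct
    have h3 : HasDerivAt (fun t => f (c t) u p)
        (fderiv ℝ (fun y => f y u) (c t) (y - x) p) t := by
      have := ((ContinuousLinearMap.proj p :
        (Fin n → ℝ) →L[ℝ] ℝ).hasFDerivAt).comp_hasDerivAt t h2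
      exact this
    exact h3.hasDerivWithinAt
  have key : ‖f (c 1) u p - f (c 0) u p‖ ≤ r * ‖(1:ℝ) - 0‖ :=
    Convex.norm_image_sub_le_of_norm_hasDerivWithin_le hderiv
      (fun t ht => by simpa [Real.norm_eq_abs] using hbound (c t) (hcR t ht))
      (convex_Icc 0 1) (Set.left_mem_Icc.2 zero_le_one) (Set.right_mem_Icc.2 zero_le_one)
  have hc0 : c 0 = x := by funext j; simp [hc]
  have hc1 : c 1 = y := by funext j; simp [hc]
  rw [hc0, hc1] at key
  simpa [Real.norm_eq_abs] using key
end

section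
/- Let n, m be natural numbers. Let M : Fin m → Fin n → ℝ, b : Fin m → ℝ, d : Fin n → ℝ, with every row of M nonzero (so ∑_{q} |M k q| > 0 for all k), and let x' : Fin n → ℝ. For λ ∈ ℝ define r(λ) := min over rows k of (λ * (b k - ∑_{q} M k q * d q) + (∑_{q} M k q * d q) - (∑_{q} M k q * x' q)) / (∑_{q} |M k q|). Let J : Fin n → Fin n → ℝ have nonnegative entries, let x, c : Fin n → ℝ, let δ : Fin n → ℝ have nonnegative entries, and define D := max over p of ∑_{q} J p q * (|x q - c q| + δ q). Assume r(2) > r(1) and set λ⁺ := 1 + (D - r(1)) / (r(2) - r(1)). If 1 ≤ λ⁺ ≤ 2, then for every y with |y q - c q| ≤ δ q for all q, and for every p, ∑_{q} J p q * |x q - y q| ≤ r(λ⁺). -/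
/-- Minimum of `g` over all indices of `Fin m` (well defined since `0 < m`). -/
noncomputable def finMinOver {m : ℕ} (hm : 0 < m) (g : Fin m → ℝ) : ℝ :=
  Finset.univ.inf' ⟨⟨0, hm⟩, Finset.mem_univ _⟩ g

/-- Maximum of `g` over all indices of `Fin n` (well defined since `0 < n`). -/
noncomputable def finMaxOver {n : ℕ} (hn : 0 < n) (g : Fin n → ℝ) : ℝ :=
  Finset.univ.sup' ⟨⟨0, hn⟩, Finset.mem_univ _⟩ g

/-- Correctness of formula (13) of the paper: with `r(λ)` the radius of the largest
`x'`-centered closed L∞-ball contained in the scaled polytope `R(λ)`, and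
`D = ‖J⁺ · (|x - c| + δ)‖∞` for a voxel with centre `c` and radius `δ`, the
overapproximating scaling factor `λ⁺ = 1 + (D - r(1))/(r(2) - r(1))` guarantees that
every point `y` of the voxel satisfies `‖J⁺ · |x - y|‖∞ ≤ r(λ⁺)`. -/
theorem voxel_scaling_factor_correct
    (n m : ℕ) (hn : 0 < n) (hm : 0 < m)
    (M : Fin m → Fin n → ℝ) (b : Fin m → ℝ) (d : Fin n → ℝ)
    (hM : ∀ k : Fin m, 0 < ∑ q : Fin n, |M k q|)
    (x' : Fin n → ℝ)
    (J : Fin n → Fin n → ℝ) (hJ : ∀ p q : Fin n, 0 ≤ J p q)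
    (x c : Fin n → ℝ) (δ : Fin n → ℝ) (hδ : ∀ q : Fin n, 0 ≤ δ q) :
    let r : ℝ → ℝ := fun lam => finMinOver hm fun k : Fin m =>
      (lam * (b k - ∑ q : Fin n, M k q * d q) + (∑ q : Fin n, M k q * d q)
        - (∑ q : Fin n, M k q * x' q)) / (∑ q : Fin n, |M k q|)
    let D : ℝ := finMaxOver hn fun p : Fin n => ∑ q : Fin n, J p q * (|x q - c q| + δ q)
    let lamPlus : ℝ := 1 + (D - r 1) / (r 2 - r 1)
    r 1 < r 2 → 1 ≤ lamPlus → lamPlus ≤ 2 →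
    ∀ y : Fin n → ℝ, (∀ q : Fin n, |y q - c q| ≤ δ q) →
      ∀ p : Fin n, ∑ q : Fin n, J p q * |x q - y q| ≤ r lamPlus := by
  intro r D lamPlus hlt h1 h2 y hy p
  set t : ℝ := (D - r 1) / (r 2 - r 1) with ht
  have hsub : (0:ℝ) < r 2 - r 1 := by linarith
  have ht0 : 0 ≤ t := by
    have : 1 ≤ 1 + t := h1
    linarith
  have ht1 : t ≤ 1 := by
    have : 1 + t ≤ 2 := h2
    linarith
  -- Step 1: ∑ J p q |x q - y q| ≤ D
  have step1 : ∑ q : Fin n, J p q * |x q - y q| ≤ D := by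
    have hle : ∑ q : Fin n, J p q * |x q - y q|
        ≤ ∑ q : Fin n, J p q * (|x q - c q| + δ q) := by
      apply Finset.sum_le_sum
      intro q _
      apply mul_le_mul_of_nonneg_left _ (hJ p q)
      calc |x q - y q| = |(x q - c q) + (c q - y q)| := by ring_nf
        _ ≤ |x q - c q| + |c q - y q| := abs_add_le _ _
        _ ≤ |x q - c q| + δ q := by
            have := hy q
            rw [abs_sub_comm] at this
            linarith
    refine hle.trans ?_
    exact Finset.le_sup' (fun p : Fin n => ∑ q : Fin n, J p q * (|x q - c q| + δ q))
      (Finset.mem_univ p)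
  -- Step 2: D ≤ r lamPlus
  have step2 : D ≤ r lamPlus := by
    have hD : D = (1 - t) * r 1 + t * r 2 := by
      have e : t * (r 2 - r 1) = D - r 1 := by rw [ht]; exact div_mul_cancel₀ _ hsub.ne'
      linarith
    rw [hD]
    refine Finset.le_inf' _ _ (fun k _ => ?_)
    have hr1 : r 1 ≤ (1 * (b k - ∑ q : Fin n, M k q * d q) + (∑ q : Fin n, M k q * d q)
        - (∑ q : Fin n, M k q * x' q)) / (∑ q : Fin n, |M k q|) :=
      Finset.inf'_le _ (Finset.mem_univ k)
    have hr2 : r 2 ≤ (2 * (b k - ∑ q : Fin n, M k q * d q) + (∑ q : Fin n, M k q * d q)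
        - (∑ q : Fin n, M k q * x' q)) / (∑ q : Fin n, |M k q|) :=
      Finset.inf'_le _ (Finset.mem_univ k)
    have hC := hM k
    have key : (lamPlus * (b k - ∑ q : Fin n, M k q * d q) + (∑ q : Fin n, M k q * d q)
        - (∑ q : Fin n, M k q * x' q)) / (∑ q : Fin n, |M k q|)
        = (1 - t) * ((1 * (b k - ∑ q : Fin n, M k q * d q) + (∑ q : Fin n, M k q * d q)
            - (∑ q : Fin n, M k q * x' q)) / (∑ q : Fin n, |M k q|))
          + t * ((2 * (b k - ∑ q : Fin n, M k q * d q) + (∑ q : Fin n, M k q * d q)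
            - (∑ q : Fin n, M k q * x' q)) / (∑ q : Fin n, |M k q|)) := by
      show ((1 + t) * _ + _ - _) / _ = _
      field_simp
      ring
    rw [key]
    have h1' := mul_le_mul_of_nonneg_left hr1 (by linarith : (0:ℝ) ≤ 1 - t)
    have h2' := mul_le_mul_of_nonneg_left hr2 ht0
    linarith
  exact step1.trans step2
end

section
/- Let N be a natural number, let p ∈ [0, 1], let β ∈ (0, 1), and let L : ℕ → ℝ satisfy: L 0 = 0; for every k with 1 ≤ k ≤ N, 0 ≤ L k ≤ 1 and ∑_{i=k}^{N} (N choose i) * (L k)^i * (1 - L k)^(N-i) ≤ β/2. Then ∑_{k=0}^{N} (if L k ≤ p then (N choose k) * p^k * (1-p)^(N-k) else 0) ≥ 1 - β/2; equivalently, the Binomial(N, p) probability of observing a count k with L k > p is at most β/2. -/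
/-- The upper tail of a Binomial(N, q) distribution from count `k`. -/
noncomputable def cpTail (N k : ℕ) (q : ℝ) : ℝ :=
  ∑ i ∈ Finset.Icc k N, (N.choose i : ℝ) * q ^ i * (1 - q) ^ (N - i)

lemma cpTail_zero (N : ℕ) (q : ℝ) : cpTail N 0 q = 1 := by
  have h := add_pow q (1 - q) N
  simp only [add_sub_cancel, one_pow] at h
  unfold cpTail
  rw [show Finset.Icc 0 N = Finset.range (N+1) by rw [Finset.range_eq_Ico]; rfl]
  calc ∑ i ∈ Finset.range (N + 1), (N.choose i : ℝ) * q ^ i * (1 - q) ^ (N - i)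
      = ∑ m ∈ Finset.range (N + 1), q ^ m * (1 - q) ^ (N - m) * (N.choose m : ℝ) :=
        Finset.sum_congr rfl fun i _ => by ring
    _ = 1 := h.symm

lemma cpTail_nonneg (N k : ℕ) {q : ℝ} (h0 : 0 ≤ q) (h1 : q ≤ 1) : 0 ≤ cpTail N k q := by
  refine Finset.sum_nonneg fun i _ => ?_
  have : (0:ℝ) ≤ 1 - q := by linarith
  positivity

lemma cpTail_anti (N : ℕ) {k k' : ℕ} (hk : k ≤ k') {q : ℝ} (h0 : 0 ≤ q) (h1 : q ≤ 1) :
    cpTail N k' q ≤ cpTail N k q := by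
  refine Finset.sum_le_sum_of_subset_of_nonneg (Finset.Icc_subset_Icc_left hk) fun i _ _ => ?_
  have : (0:ℝ) ≤ 1 - q := by linarith
  positivity

/-- Pascal-type recursion for the binomial upper tail. -/
lemma cpTail_succ (N j : ℕ) (q : ℝ) :
    cpTail (N+1) (j+1) q = q * cpTail N j q + (1-q) * cpTail N (j+1) q := by
  by_cases hj : j ≤ N
  · unfold cpTail
    have reidx : ∀ g : ℕ → ℝ,
        ∑ i ∈ Finset.Icc (j+1) (N+1), g i = ∑ m ∈ Finset.Icc j N, g (m+1) := by
      intro g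
      rw [← Finset.map_add_right_Icc, Finset.sum_map]
      rfl
    have h2 : ∑ m ∈ Finset.Icc j N, (N.choose (m+1):ℝ) * q^(m+1) * (1-q)^(N-m)
        = (1-q) * ∑ i ∈ Finset.Icc (j+1) N, (N.choose i:ℝ) * q^i * (1-q)^(N-i) := by
      have e1 : ∑ m ∈ Finset.Icc j N, (N.choose (m+1):ℝ) * q^(m+1) * (1-q)^(N-m)
          = ∑ i ∈ Finset.Icc (j+1) (N+1), (N.choose i:ℝ) * q^i * (1-q)^(N+1-i) := by
        rw [reidx]
        exact Finset.sum_congr rfl fun m _ => by rw [Nat.succ_sub_succ]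
      rw [e1, Finset.sum_Icc_succ_top (by omega : j+1 ≤ N+1)]
      simp only [Nat.choose_succ_self, Nat.cast_zero, zero_mul, mul_zero, add_zero]
      rw [Finset.mul_sum]
      refine Finset.sum_congr rfl fun i hi => ?_
      have hiN : i ≤ N := (Finset.mem_Icc.mp hi).2
      have : N + 1 - i = (N - i) + 1 := by omega
      rw [this]; ring
    calc ∑ i ∈ Finset.Icc (j+1) (N+1), ((N+1).choose i : ℝ) * q ^ i * (1 - q) ^ (N+1 - i)
        = ∑ m ∈ Finset.Icc j N,
            (((N.choose m : ℝ) + (N.choose (m+1) : ℝ)) * q ^ (m+1) * (1 - q) ^ (N - m)) := by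
          rw [reidx]
          refine Finset.sum_congr rfl fun m _ => ?_
          rw [Nat.succ_sub_succ, Nat.choose_succ_succ]
          push_cast; ring
      _ = q * (∑ m ∈ Finset.Icc j N, (N.choose m:ℝ) * q^m * (1-q)^(N-m))
          + ∑ m ∈ Finset.Icc j N, (N.choose (m+1):ℝ) * q^(m+1) * (1-q)^(N-m) := by
          rw [Finset.mul_sum, ← Finset.sum_add_distrib]
          refine Finset.sum_congr rfl fun m _ => by ring
      _ = q * (∑ m ∈ Finset.Icc j N, (N.choose m:ℝ) * q^m * (1-q)^(N-m))
          + (1-q) * ∑ i ∈ Finset.Icc (j+1) N, (N.choose i:ℝ) * q^i * (1-q)^(N-i) := by rw [h2]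
  · have e1 : Finset.Icc (j+1) (N+1) = ∅ := Finset.Icc_eq_empty (by omega)
    have e2 : Finset.Icc j N = (∅ : Finset ℕ) := Finset.Icc_eq_empty (by omega)
    have e3 : Finset.Icc (j+1) N = (∅ : Finset ℕ) := Finset.Icc_eq_empty (by omega)
    simp [cpTail, e1, e2, e3]

/-- Monotonicity of the binomial upper tail in the success probability. -/
lemma cpTail_mono (N : ℕ) : ∀ (k : ℕ) {q q' : ℝ}, 0 ≤ q → q ≤ q' → q' ≤ 1 →
    cpTail N k q ≤ cpTail N k q' := by
  induction N with
  | zero =>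
    intro k q q' h0 hqq h1
    rcases Nat.eq_zero_or_pos k with hk | hk
    · subst hk; rw [cpTail_zero, cpTail_zero]
    · have : Finset.Icc k 0 = (∅ : Finset ℕ) := Finset.Icc_eq_empty (by omega)
      simp [cpTail, this]
  | succ N ih =>
    intro k q q' h0 hqq h1
    rcases Nat.eq_zero_or_pos k with hk | hk
    · subst hk; rw [cpTail_zero, cpTail_zero]
    · obtain ⟨j, rfl⟩ : ∃ j, k = j + 1 := ⟨k - 1, by omega⟩
      rw [cpTail_succ, cpTail_succ]
      have hq0' : 0 ≤ q' := le_trans h0 hqq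
      have hq1 : q ≤ 1 := le_trans hqq h1
      have hA := ih j h0 hqq h1
      have hB := ih (j+1) h0 hqq h1
      have hAB : cpTail N (j+1) q' ≤ cpTail N j q' := cpTail_anti N (by omega) hq0' h1
      nlinarith [cpTail_nonneg N j hq0' h1, cpTail_nonneg N (j+1) hq0' h1]

/-- Coverage guarantee of the Clopper-Pearson lower confidence bound (first half of
Theorem 4 of the paper): if `L 0 = 0` and, for every count `k` with `1 ≤ k ≤ N`,
`L k ∈ [0,1]` and the binomial upper tail at `L k` is at most `β/2`, then the
Binomial(N, p) probability of observing a count `k` with `L k ≤ p` is at least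
`1 - β/2`. -/
theorem clopper_pearson_lower_coverage
    (N : ℕ) (p : ℝ) (hp0 : 0 ≤ p) (hp1 : p ≤ 1)
    (β : ℝ) (hβ : β ∈ Set.Ioo (0 : ℝ) 1)
    (L : ℕ → ℝ) (hL0 : L 0 = 0)
    (hL : ∀ k : ℕ, 1 ≤ k → k ≤ N →
      0 ≤ L k ∧ L k ≤ 1 ∧
      ∑ i ∈ Finset.Icc k N, (N.choose i : ℝ) * (L k) ^ i * (1 - L k) ^ (N - i) ≤ β / 2) :
    ∑ k ∈ Finset.range (N + 1),
        (if L k ≤ p then (N.choose k : ℝ) * p ^ k * (1 - p) ^ (N - k) else 0) ≥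
      1 - β / 2 := by
  have hq : (0:ℝ) ≤ 1 - p := by linarith
  set f : ℕ → ℝ := fun k => (N.choose k : ℝ) * p ^ k * (1 - p) ^ (N - k) with hf
  have hfnn : ∀ k, 0 ≤ f k := fun k => by positivity
  have htot : ∑ k ∈ Finset.range (N + 1), f k = 1 := by
    have := cpTail_zero N p
    unfold cpTail at this
    rwa [show Finset.Icc 0 N = Finset.range (N+1) by rw [Finset.range_eq_Ico]; rfl] at this
  have hsplit := Finset.sum_filter_add_sum_filter_not (Finset.range (N+1))
    (fun k => L k ≤ p) f
  rw [htot] at hsplit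
  have hif : ∑ k ∈ Finset.range (N + 1), (if L k ≤ p then f k else 0)
      = ∑ k ∈ (Finset.range (N+1)).filter (fun k => L k ≤ p), f k :=
    (Finset.sum_filter _ _).symm
  rw [ge_iff_le, hif]
  set F := (Finset.range (N+1)).filter (fun k => ¬ L k ≤ p) with hF
  have key : ∑ k ∈ F, f k ≤ β / 2 := by
    rcases F.eq_empty_or_nonempty with he | hne
    · rw [he, Finset.sum_empty]; linarith [hβ.1]
    · set k₀ := F.min' hne with hk₀
      have hk₀F : k₀ ∈ F := F.min'_mem hne
      obtain ⟨hk₀r, hk₀p⟩ := Finset.mem_filter.mp hk₀F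
      have hk₀N : k₀ ≤ N := by have := Finset.mem_range.mp hk₀r; omega
      have hk₀1 : 1 ≤ k₀ := by
        rcases Nat.eq_zero_or_pos k₀ with h | h
        · exfalso; apply hk₀p; rw [h, hL0]; exact hp0
        · exact h
      obtain ⟨hL0', hL1', hLtail⟩ := hL k₀ hk₀1 hk₀N
      have hsub : F ⊆ Finset.Icc k₀ N := by
        intro k hk
        have h1 := F.min'_le k hk
        have h2 := Finset.mem_range.mp (Finset.mem_filter.mp hk).1
        exact Finset.mem_Icc.mpr ⟨h1, by omega⟩
      have h1 : ∑ k ∈ F, f k ≤ cpTail N k₀ p :=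
        Finset.sum_le_sum_of_subset_of_nonneg hsub fun i _ _ => hfnn i
      have h2 : cpTail N k₀ p ≤ cpTail N k₀ (L k₀) :=
        cpTail_mono N k₀ hp0 (le_of_not_ge hk₀p) hL1'
      calc ∑ k ∈ F, f k ≤ cpTail N k₀ (L k₀) := le_trans h1 h2
        _ ≤ β / 2 := hLtail
  linarith [hsplit, key]
end

section
/- Let N be a natural number, let p ∈ [0, 1], let β ∈ (0, 1), and let U : ℕ → ℝ satisfy: U N = 1; for every k with k < N, 0 ≤ U k ≤ 1 and ∑_{i=0}^{k} (N choose i) * (U k)^i * (1 - U k)^(N-i) ≤ β/2. Then ∑_{k=0}^{N} (if p ≤ U k then (N choose k) * p^k * (1-p)^(N-k) else 0) ≥ 1 - β/2; equivalently, the Binomial(N, p) probability of observing a count k with U k < p is at most β/2. -/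
lemma binom_tail_hasDerivAt (M k : ℕ) (hk : k ≤ M) (q : ℝ) :
    HasDerivAt (fun x : ℝ => ∑ i ∈ Finset.range (k+1),
        ((M+1).choose i : ℝ) * x ^ i * (1-x) ^ (M+1-i))
      (-(((M:ℝ)+1) * (M.choose k : ℝ) * q ^ k * (1-q) ^ (M-k))) q := by
  set f : ℕ → ℝ := fun j => match j with
    | 0 => 0
    | j+1 => ((M:ℝ)+1) * (M.choose j : ℝ) * q ^ j * (1-q) ^ (M-j) with hf
  have hsum : ∑ i ∈ Finset.range (k+1), (f i - f (i+1)) =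
      -(((M:ℝ)+1) * (M.choose k : ℝ) * q ^ k * (1-q) ^ (M-k)) := by
    rw [Finset.sum_range_sub' f]
    simp [hf]
  rw [← hsum]
  apply HasDerivAt.fun_sum
  intro i hi
  have hiM : i ≤ M := le_trans (Nat.lt_succ_iff.mp (Finset.mem_range.mp hi)) hk
  have h1 : HasDerivAt (fun x : ℝ => x ^ i) ((i : ℝ) * q ^ (i-1)) q := hasDerivAt_pow i q
  have h2 : HasDerivAt (fun x : ℝ => (1-x) ^ (M+1-i))
      (((M+1-i : ℕ) : ℝ) * (1-q) ^ (M+1-i-1) * (-1)) q :=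
    ((hasDerivAt_id q).const_sub 1).pow _
  have h3 := (h1.const_mul (((M+1).choose i : ℝ))).fun_mul h2
  convert h3 using 1
  · rfl
  match i with
  | 0 =>
    simp [hf, Nat.sub_zero]
  | j+1 =>
    have e1 : ((j+1) * (M+1).choose (j+1) : ℕ) = (M+1) * M.choose j := by
      rw [mul_comm, Nat.add_one_mul_choose_eq M j]
    have e2 : ((M+1).choose (j+1) * (M - j) : ℕ) = (M+1) * M.choose (j+1) := by
      have h := Nat.choose_succ_right_eq (M+1) (j+1)
      have h' := Nat.add_one_mul_choose_eq M (j+1)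
      have hx : M + 1 - (j+1) = M - j := by omega
      rw [hx] at h
      rw [← h, ← h']
    have hx1 : M + 1 - (j+1) = M - j := by omega
    have hx2 : M + 1 - (j+1) - 1 = M - (j+1) := by omega
    have hjM : j + 1 ≤ M := hiM
    simp only [hf, hx1, hx2]
    have c1 : ((j:ℝ)+1) * ((M+1).choose (j+1) : ℝ) = ((M:ℝ)+1) * (M.choose j : ℝ) := by
      exact_mod_cast congrArg (Nat.cast : ℕ → ℝ) e1
    have c2 : ((M+1).choose (j+1) : ℝ) * ((M:ℝ) - (j:ℝ)) = ((M:ℝ)+1) * (M.choose (j+1) : ℝ) := by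
      have := congrArg (Nat.cast : ℕ → ℝ) e2
      push_cast [Nat.cast_sub (by omega : j ≤ M)] at this
      linarith [this]
    have hcast : ((M - j : ℕ) : ℝ) = (M:ℝ) - (j:ℝ) := Nat.cast_sub (by omega)
    have hy : M - (j+1) = M - j - 1 := by omega
    have hpow : (1-q) ^ (M-j) = (1-q) * (1-q) ^ (M-j-1) := by
      rw [← pow_succ']
      congr 1
      omega
    rw [hy, hcast, hpow]
    have hq : q ^ (j+1-1) = q ^ j := rfl
    rw [hq]
    push_cast
    linear_combination (-(1-q) * (1-q)^(M-j-1) * q^j) * c1 + (q^(j+1) * (1-q)^(M-j-1)) * c2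

lemma binom_tail_anti (M k : ℕ) (hk : k ≤ M) {a b : ℝ} (ha : 0 ≤ a) (hab : a ≤ b) (hb : b ≤ 1) :
    ∑ i ∈ Finset.range (k+1), ((M+1).choose i : ℝ) * b ^ i * (1-b) ^ (M+1-i) ≤
      ∑ i ∈ Finset.range (k+1), ((M+1).choose i : ℝ) * a ^ i * (1-a) ^ (M+1-i) := by
  set g : ℝ → ℝ := fun x => ∑ i ∈ Finset.range (k+1),
      ((M+1).choose i : ℝ) * x ^ i * (1-x) ^ (M+1-i) with hg
  have hanti : AntitoneOn g (Set.Icc (0:ℝ) 1) := by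
    apply antitoneOn_of_deriv_nonpos (convex_Icc 0 1)
    · exact fun x _ => ((binom_tail_hasDerivAt M k hk x).continuousAt).continuousWithinAt
    · intro x _
      exact ((binom_tail_hasDerivAt M k hk x).differentiableAt).differentiableWithinAt
    · intro x hx
      rw [interior_Icc] at hx
      rw [(binom_tail_hasDerivAt M k hk x).deriv]
      have h1 : (0:ℝ) ≤ x ^ k := pow_nonneg (le_of_lt hx.1) k
      have h2 : (0:ℝ) ≤ (1-x) ^ (M-k) := pow_nonneg (by linarith [hx.2]) _
      have h3 : (0:ℝ) ≤ (M.choose k : ℝ) := Nat.cast_nonneg _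
      have : (0:ℝ) ≤ ((M:ℝ)+1) * (M.choose k : ℝ) * x ^ k * (1-x) ^ (M-k) := by positivity
      linarith
  exact hanti (Set.mem_Icc.mpr ⟨ha, le_trans hab hb⟩) (Set.mem_Icc.mpr ⟨le_trans ha hab, hb⟩) hab

/-- Coverage guarantee of the Clopper-Pearson upper confidence bound (second half of
Theorem 4 of the paper): if `U N = 1` and, for every count `k < N`, `U k ∈ [0,1]` and
the binomial lower tail at `U k` is at most `β/2`, then the Binomial(N, p) probability
of observing a count `k` with `p ≤ U k` is at least `1 - β/2`. -/
theorem clopper_pearson_upper_coverage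
    (N : ℕ) (p : ℝ) (hp0 : 0 ≤ p) (hp1 : p ≤ 1)
    (β : ℝ) (hβ : β ∈ Set.Ioo (0 : ℝ) 1)
    (U : ℕ → ℝ) (hUN : U N = 1)
    (hU : ∀ k : ℕ, k < N →
      0 ≤ U k ∧ U k ≤ 1 ∧
      ∑ i ∈ Finset.range (k + 1), (N.choose i : ℝ) * (U k) ^ i * (1 - U k) ^ (N - i) ≤ β / 2) :
    ∑ k ∈ Finset.range (N + 1),
        (if p ≤ U k then (N.choose k : ℝ) * p ^ k * (1 - p) ^ (N - k) else 0) ≥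
      1 - β / 2 := by
  set B : ℕ → ℝ := fun k => (N.choose k : ℝ) * p ^ k * (1 - p) ^ (N - k) with hB
  have hBnn : ∀ k, 0 ≤ B k := fun k => by
    have := pow_nonneg hp0 k
    have := pow_nonneg (by linarith : (0:ℝ) ≤ 1 - p) (N - k)
    positivity
  have htot : ∑ k ∈ Finset.range (N + 1), B k = 1 := by
    have h := add_pow p (1-p) N
    simp only [add_sub_cancel, one_pow] at h
    rw [h]
    apply Finset.sum_congr rfl
    intro k _
    ring
  have hsplit : ∀ k, (if p ≤ U k then B k else 0) = B k - (if p ≤ U k then 0 else B k) := by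
    intro k; by_cases h : p ≤ U k <;> simp [h]
  change ∑ k ∈ Finset.range (N + 1), (if p ≤ U k then B k else 0) ≥ 1 - β / 2
  simp only [hsplit]
  rw [Finset.sum_sub_distrib, htot, ge_iff_le]
  have key : ∑ k ∈ Finset.range (N + 1), (if p ≤ U k then 0 else B k) ≤ β / 2 := by
    set T := (Finset.range (N + 1)).filter (fun k => ¬ p ≤ U k) with hT
    by_cases hTe : T.Nonempty
    · set m := T.max' hTe with hm
      have hmT : m ∈ T := T.max'_mem hTe
      have hmN : m ≤ N := by
        have := (Finset.mem_filter.mp hmT).1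
        simp only [Finset.mem_range] at this
        omega
      have hUm : U m < p := lt_of_not_ge (Finset.mem_filter.mp hmT).2
      have hmN' : m < N := by
        rcases lt_or_eq_of_le hmN with h | h
        · exact h
        · exfalso; rw [h, hUN] at hUm; linarith
      obtain ⟨hUm0, hUm1, hUtail⟩ := hU m hmN'
      obtain ⟨M, rfl⟩ : ∃ M, N = M + 1 := ⟨N - 1, by omega⟩
      calc (∑ k ∈ Finset.range (M + 1 + 1), if p ≤ U k then 0 else B k)
          ≤ ∑ k ∈ Finset.range (M + 1 + 1), (if k ≤ m then B k else 0) := by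
            apply Finset.sum_le_sum
            intro k hk
            by_cases h : p ≤ U k
            · simp only [h, if_true]
              by_cases h2 : k ≤ m <;> simp [h2, hBnn k]
            · have hkT : k ∈ T := Finset.mem_filter.mpr ⟨hk, h⟩
              have : k ≤ m := Finset.le_max' T k hkT
              simp [h, this]
        _ = ∑ k ∈ Finset.range (m + 1), B k := by
            rw [← Finset.sum_filter]
            apply Finset.sum_congr _ (fun _ _ => rfl)
            ext x
            simp only [Finset.mem_filter, Finset.mem_range]
            omega
        _ ≤ ∑ i ∈ Finset.range (m + 1),
              ((M+1).choose i : ℝ) * (U m) ^ i * (1 - U m) ^ (M + 1 - i) := by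
            exact binom_tail_anti M m (by omega) hUm0 (le_of_lt hUm) hp1
        _ ≤ β / 2 := hUtail
    · rw [Finset.not_nonempty_iff_eq_empty, hT, Finset.filter_eq_empty_iff] at hTe
      have : ∀ k ∈ Finset.range (N + 1), (if p ≤ U k then (0:ℝ) else B k) = 0 := by
        intro k hk
        have := hTe hk
        simp only [not_not] at this
        simp [this]
      rw [Finset.sum_congr rfl this]
      simp
      linarith [hβ.1]
  linarith
end

section
/- Let N be a natural number, let p ∈ [0, 1], let β ∈ (0, 1), and let L, U : ℕ → ℝ satisfy: L 0 = 0; for every k with 1 ≤ k ≤ N, 0 ≤ L k ≤ 1 and ∑_{i=k}^{N} (N choose i) * (L k)^i * (1 - L k)^(N-i) ≤ β/2; U N = 1; and for every k with k < N, 0 ≤ U k ≤ 1 and ∑_{i=0}^{k} (N choose i) * (U k)^i * (1 - U k)^(N-i) ≤ β/2. Then ∑_{k=0}^{N} (if L k ≤ p ∧ p ≤ U k then (N choose k) * p^k * (1-p)^(N-k) else 0) ≥ 1 - β. -/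
open Finset

lemma cp_sum_Icc_telescope (g : ℕ → ℝ) (k N : ℕ) (h : k ≤ N + 1) :
    ∑ i ∈ Finset.Icc k N, (g i - g (i + 1)) = g k - g (N + 1) := by
  rw [← Finset.Ico_add_one_right_eq_Icc, Finset.sum_Ico_eq_sum_range]
  have h2 := Finset.sum_range_sub' (fun i => g (k + i)) (N + 1 - k)
  simp only [add_assoc] at h2 ⊢
  rw [h2, Nat.add_sub_cancel' h]
  simp

lemma cp_tail_hasDerivAt (N k : ℕ) (q : ℝ) :
    HasDerivAt (fun q : ℝ => ∑ i ∈ Finset.Icc k N, (N.choose i : ℝ) * q ^ i * (1 - q) ^ (N - i))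
      ((k : ℝ) * (N.choose k : ℝ) * q ^ (k - 1) * (1 - q) ^ (N - k)) q := by
  have hterm : ∀ i : ℕ,
      HasDerivAt (fun q : ℝ => (N.choose i : ℝ) * q ^ i * (1 - q) ^ (N - i))
        ((N.choose i : ℝ) * ((i : ℝ) * q ^ (i - 1)) * (1 - q) ^ (N - i)
          + (N.choose i : ℝ) * q ^ i * (((N - i : ℕ) : ℝ) * (1 - q) ^ (N - i - 1) * (-1))) q := by
    intro i
    have h1 : HasDerivAt (fun q : ℝ => (N.choose i : ℝ) * q ^ i)
        ((N.choose i : ℝ) * ((i : ℝ) * q ^ (i - 1))) q :=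
      (hasDerivAt_pow i q).const_mul _
    have hlin : HasDerivAt (fun q : ℝ => 1 - q) (-1 : ℝ) q := by
      simpa using (hasDerivAt_id q).const_sub 1
    have h2 : HasDerivAt (fun q : ℝ => (1 - q) ^ (N - i))
        (((N - i : ℕ) : ℝ) * (1 - q) ^ (N - i - 1) * (-1)) q :=
      (hasDerivAt_pow (N - i) (1 - q)).comp q hlin
    simpa [mul_assoc] using h1.fun_mul h2
  have hsum : HasDerivAt
      (fun q : ℝ => ∑ i ∈ Finset.Icc k N, (N.choose i : ℝ) * q ^ i * (1 - q) ^ (N - i))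
      (∑ i ∈ Finset.Icc k N,
        ((N.choose i : ℝ) * ((i : ℝ) * q ^ (i - 1)) * (1 - q) ^ (N - i)
          + (N.choose i : ℝ) * q ^ i * (((N - i : ℕ) : ℝ) * (1 - q) ^ (N - i - 1) * (-1)))) q :=
    HasDerivAt.fun_sum (fun i _ => hterm i)
  set g : ℕ → ℝ := fun j => (j : ℝ) * (N.choose j : ℝ) * q ^ (j - 1) * (1 - q) ^ (N - j) with hg
  have hD : ∀ i : ℕ,
      (N.choose i : ℝ) * ((i : ℝ) * q ^ (i - 1)) * (1 - q) ^ (N - i)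
          + (N.choose i : ℝ) * q ^ i * (((N - i : ℕ) : ℝ) * (1 - q) ^ (N - i - 1) * (-1))
        = g i - g (i + 1) := by
    intro i
    have hc : ((N.choose (i + 1) : ℝ)) * ((i : ℝ) + 1) = (N.choose i : ℝ) * ((N - i : ℕ) : ℝ) := by
      have := Nat.choose_succ_right_eq N i
      exact_mod_cast this
    simp only [hg, Nat.add_sub_cancel]
    have he : N - (i + 1) = N - i - 1 := by omega
    rw [he]
    push_cast
    linear_combination (q ^ i * (1 - q) ^ (N - i - 1)) * hc
  have htel : ∑ i ∈ Finset.Icc k N,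
      ((N.choose i : ℝ) * ((i : ℝ) * q ^ (i - 1)) * (1 - q) ^ (N - i)
        + (N.choose i : ℝ) * q ^ i * (((N - i : ℕ) : ℝ) * (1 - q) ^ (N - i - 1) * (-1)))
      = (k : ℝ) * (N.choose k : ℝ) * q ^ (k - 1) * (1 - q) ^ (N - k) := by
    by_cases hkN : k ≤ N + 1
    · rw [Finset.sum_congr rfl (fun i _ => hD i), cp_sum_Icc_telescope g k N hkN]
      have : g (N + 1) = 0 := by
        simp [hg, Nat.choose_eq_zero_of_lt (Nat.lt_succ_self N)]
      rw [this, sub_zero]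
    · rw [Finset.Icc_eq_empty (by omega)]
      simp [hg, Nat.choose_eq_zero_of_lt (by omega : N < k)]
  rw [← htel]
  exact hsum

lemma cp_tail_mono (N k : ℕ) {a b : ℝ} (ha : 0 ≤ a) (hab : a ≤ b) (hb : b ≤ 1) :
    ∑ i ∈ Finset.Icc k N, (N.choose i : ℝ) * a ^ i * (1 - a) ^ (N - i)
      ≤ ∑ i ∈ Finset.Icc k N, (N.choose i : ℝ) * b ^ i * (1 - b) ^ (N - i) := by
  have hmono : MonotoneOn
      (fun q : ℝ => ∑ i ∈ Finset.Icc k N, (N.choose i : ℝ) * q ^ i * (1 - q) ^ (N - i))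
      (Set.Icc (0 : ℝ) 1) := by
    apply monotoneOn_of_deriv_nonneg (convex_Icc 0 1)
    · exact fun q _ => ((cp_tail_hasDerivAt N k q).continuousAt).continuousWithinAt
    · exact fun q _ => ((cp_tail_hasDerivAt N k q).differentiableAt).differentiableWithinAt
    · intro q hq
      rw [interior_Icc] at hq
      rw [(cp_tail_hasDerivAt N k q).deriv]
      have h1 : (0:ℝ) ≤ q ^ (k - 1) := pow_nonneg (le_of_lt hq.1) _
      have h2 : (0:ℝ) ≤ (1 - q) ^ (N - k) := pow_nonneg (by linarith [hq.2]) _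
      positivity
  exact hmono ⟨ha, le_trans hab hb⟩ ⟨le_trans ha hab, hb⟩ hab
/-- Two-sided coverage of the Clopper-Pearson interval (Theorem 4 of the paper): with
probability at least `1 - β` over the observed count of `N` independent Bernoulli(p)
trials, the interval `[L(count), U(count)]` contains the true success probability. -/
theorem clopper_pearson_two_sided_coverage
    (N : ℕ) (p : ℝ) (hp0 : 0 ≤ p) (hp1 : p ≤ 1)
    (β : ℝ) (hβ : β ∈ Set.Ioo (0 : ℝ) 1)
    (L U : ℕ → ℝ) (hL0 : L 0 = 0)
    (hL : ∀ k : ℕ, 1 ≤ k → k ≤ N →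
      0 ≤ L k ∧ L k ≤ 1 ∧
      ∑ i ∈ Finset.Icc k N, (N.choose i : ℝ) * (L k) ^ i * (1 - L k) ^ (N - i) ≤ β / 2)
    (hUN : U N = 1)
    (hU : ∀ k : ℕ, k < N →
      0 ≤ U k ∧ U k ≤ 1 ∧
      ∑ i ∈ Finset.range (k + 1), (N.choose i : ℝ) * (U k) ^ i * (1 - U k) ^ (N - i) ≤ β / 2) :
    ∑ k ∈ Finset.range (N + 1),
        (if L k ≤ p ∧ p ≤ U k then (N.choose k : ℝ) * p ^ k * (1 - p) ^ (N - k) else 0) ≥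
      1 - β := by
  obtain ⟨hβ0, hβ1⟩ := hβ
  have hsum1 : ∀ q : ℝ, ∑ k ∈ Finset.range (N + 1),
      (N.choose k : ℝ) * q ^ k * (1 - q) ^ (N - k) = 1 := by
    intro q
    have h := add_pow q (1 - q) N
    have hq1 : q + (1 - q) = 1 := by ring
    rw [hq1, one_pow] at h
    conv_rhs => rw [h]
    exact Finset.sum_congr rfl fun i _ => by ring
  set f : ℕ → ℝ := fun k => (N.choose k : ℝ) * p ^ k * (1 - p) ^ (N - k) with hfdef
  have hf0 : ∀ k, 0 ≤ f k := fun k =>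
    mul_nonneg (mul_nonneg (Nat.cast_nonneg _) (pow_nonneg hp0 _)) (pow_nonneg (by linarith) _)
  have h1 : ∑ k ∈ Finset.range (N + 1), f k = 1 := by
    simp only [hfdef]; exact hsum1 p
  -- Bound on the lower-violation probability
  have hA : ∑ k ∈ Finset.range (N + 1), (if p < L k then f k else 0) ≤ β / 2 := by
    rw [← Finset.sum_filter]
    set A := (Finset.range (N + 1)).filter (fun k => p < L k) with hAdef
    rcases A.eq_empty_or_nonempty with h | h
    · rw [h]; simp; linarith
    · obtain ⟨k₀, hmem, hk₀min⟩ : ∃ k₀ ∈ A, ∀ x ∈ A, k₀ ≤ x :=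
        ⟨A.min' h, A.min'_mem h, fun x hx => A.min'_le x hx⟩
      rw [hAdef, Finset.mem_filter, Finset.mem_range] at hmem
      have hk₀N : k₀ ≤ N := by omega
      have hk₀1 : 1 ≤ k₀ := by
        by_contra hcon
        have h0 : k₀ = 0 := by omega
        rw [h0, hL0] at hmem
        linarith [hmem.2]
      obtain ⟨hLa, hLb, htail⟩ := hL k₀ hk₀1 hk₀N
      have hsub : A ⊆ Finset.Icc k₀ N := by
        intro x hx
        rw [Finset.mem_Icc]
        refine ⟨hk₀min x hx, ?_⟩
        rw [hAdef, Finset.mem_filter, Finset.mem_range] at hx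
        omega
      calc ∑ k ∈ A, f k
          ≤ ∑ i ∈ Finset.Icc k₀ N, f i :=
            Finset.sum_le_sum_of_subset_of_nonneg hsub (fun i _ _ => hf0 i)
        _ ≤ ∑ i ∈ Finset.Icc k₀ N, (N.choose i : ℝ) * (L k₀) ^ i * (1 - L k₀) ^ (N - i) :=
            cp_tail_mono N k₀ hp0 (le_of_lt hmem.2) hLb
        _ ≤ β / 2 := htail
  -- Bound on the upper-violation probability
  have hB : ∑ k ∈ Finset.range (N + 1), (if U k < p then f k else 0) ≤ β / 2 := by
    rw [← Finset.sum_filter]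
    set B := (Finset.range (N + 1)).filter (fun k => U k < p) with hBdef
    rcases B.eq_empty_or_nonempty with h | h
    · rw [h]; simp; linarith
    · obtain ⟨k₁, hmem, hk₁max⟩ : ∃ k₁ ∈ B, ∀ x ∈ B, x ≤ k₁ :=
        ⟨B.max' h, B.max'_mem h, fun x hx => B.le_max' x hx⟩
      rw [hBdef, Finset.mem_filter, Finset.mem_range] at hmem
      have hk₁N : k₁ < N := by
        rcases lt_or_eq_of_le (by omega : k₁ ≤ N) with h' | h'
        · exact h'
        · exfalso; rw [h', hUN] at hmem; linarith [hmem.2]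
      obtain ⟨hUa, hUb, htail⟩ := hU k₁ hk₁N
      have hsub : B ⊆ Finset.range (k₁ + 1) := by
        intro x hx
        rw [Finset.mem_range, Nat.lt_succ_iff]
        exact hk₁max x hx
      have hsplit : ∀ q : ℝ,
          ∑ i ∈ Finset.range (k₁ + 1), (N.choose i : ℝ) * q ^ i * (1 - q) ^ (N - i)
          = 1 - ∑ i ∈ Finset.Icc (k₁ + 1) N, (N.choose i : ℝ) * q ^ i * (1 - q) ^ (N - i) := by
        intro q
        have hc := Finset.sum_Ico_consecutive
          (f := fun i => (N.choose i : ℝ) * q ^ i * (1 - q) ^ (N - i))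
          (Nat.zero_le (k₁ + 1)) (by omega : k₁ + 1 ≤ N + 1)
        have htot : ∑ i ∈ Finset.Ico 0 (N + 1),
            (N.choose i : ℝ) * q ^ i * (1 - q) ^ (N - i) = 1 := by
          rw [← Finset.range_eq_Ico]; exact hsum1 q
        rw [Finset.range_eq_Ico, ← Finset.Ico_add_one_right_eq_Icc]
        linarith [hc, htot]
      calc ∑ k ∈ B, f k
          ≤ ∑ i ∈ Finset.range (k₁ + 1), f i :=
            Finset.sum_le_sum_of_subset_of_nonneg hsub (fun i _ _ => hf0 i)
        _ = 1 - ∑ i ∈ Finset.Icc (k₁ + 1) N, (N.choose i : ℝ) * p ^ i * (1 - p) ^ (N - i) := by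
            simp only [hfdef]; exact hsplit p
        _ ≤ 1 - ∑ i ∈ Finset.Icc (k₁ + 1) N,
              (N.choose i : ℝ) * (U k₁) ^ i * (1 - U k₁) ^ (N - i) := by
            have := cp_tail_mono N (k₁ + 1) hUa (le_of_lt hmem.2) hp1
            linarith
        _ = ∑ i ∈ Finset.range (k₁ + 1), (N.choose i : ℝ) * (U k₁) ^ i * (1 - U k₁) ^ (N - i) :=
            (hsplit (U k₁)).symm
        _ ≤ β / 2 := htail
  -- Combine
  have key : ∀ k ∈ Finset.range (N + 1),
      f k ≤ (if L k ≤ p ∧ p ≤ U k then f k else 0)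
        + ((if p < L k then f k else 0) + (if U k < p then f k else 0)) := by
    intro k _
    have hfk := hf0 k
    by_cases hg : L k ≤ p ∧ p ≤ U k
    · rw [if_pos hg]; split_ifs <;> linarith
    · rw [if_neg hg]
      push_neg at hg
      by_cases h1' : L k ≤ p
      · have h2 := hg h1'
        rw [if_neg (not_lt.mpr h1'), if_pos h2]
        linarith
      · rw [if_pos (lt_of_not_ge h1')]
        split_ifs <;> linarith
  have hle := Finset.sum_le_sum key
  rw [Finset.sum_add_distrib, Finset.sum_add_distrib, h1] at hle
  linarith
end
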